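/- arXiv:1405.7923 — 2 statements merged into one kernel-verified Lean document; each statement's English description precedes it below -/
import Mathlib

section
/- Let L be an image-finite labelled transition system, let s, t be states with eqlevel(s,t) = e < ω, and suppose there is a sequence {(s,t)} = B_0 ⊐ B_1 ⊐ ⋯ ⊐ B_k of sets of pairs of states (each B_{j+1} a minimal expansion for B_j). Then k ≤ e and LeastEqLev(B_k) ≤ e − k; in particular, B_k contains a pair (s',t') with eqlevel(s',t') ≤ e − k. -/
/-- A labelled transition system with states `S` and actions `A`. -/
structure LTS (S : Type*) (A : Type*) where
  Tr : A → S → S → Prop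

namespace LTS

variable {S A : Type*}

/-- An LTS is image-finite if each state has finitely many `a`-successors. -/
def ImageFinite (L : LTS S A) : Prop := ∀ a s, {t | L.Tr a s t}.Finite

/-- A set `B` of pairs of states covers the pair `p`. -/
def Covers (L : LTS S A) (B : Set (S × S)) (p : S × S) : Prop :=
  (∀ a s', L.Tr a p.1 s' → ∃ t', L.Tr a p.2 t' ∧ (s', t') ∈ B) ∧
  (∀ a t', L.Tr a p.2 t' → ∃ s', L.Tr a p.1 s' ∧ (s', t') ∈ B)

/-- `B'` covers the set `B` (i.e., covers each of its pairs). -/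
def CoversSet (L : LTS S A) (B' B : Set (S × S)) : Prop := ∀ p ∈ B, L.Covers B' p

/-- `B ⊐ B'`: `B'` is a minimal expansion for `B`. -/
def MinExp (L : LTS S A) (B B' : Set (S × S)) : Prop :=
  L.CoversSet B' B ∧ ∀ B'', B'' ⊂ B' → ¬ L.CoversSet B'' B

/-- The stratified equivalences: `∼_0` is everything, `∼_{k+1}` are the pairs covered by `∼_k`. -/
def simN (L : LTS S A) : ℕ → Set (S × S)
  | 0 => Set.univ
  | k + 1 => {p | L.Covers (L.simN k) p}

/-- `eqlevel(s,t) ∈ ℕ ∪ {ω}`: the largest `e` with `s ∼_e t` (`⊤` plays the role of `ω`,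
meaning `s ∼_k t` for all `k ∈ ℕ`). -/
noncomputable def eqlevel (L : LTS S A) (s t : S) : ℕ∞ :=
  sSup {e : ℕ∞ | ∃ k : ℕ, e = (k : ℕ∞) ∧ (s, t) ∈ L.simN k}

/-- `LeastEqLev(B) = min {eqlevel(s,t) | (s,t) ∈ B}`, with `min ∅ = ω = ⊤`. -/
noncomputable def leastEqLev (L : LTS S A) (B : Set (S × S)) : ℕ∞ :=
  sInf {e : ℕ∞ | ∃ p ∈ B, e = L.eqlevel p.1 p.2}

/-- `B` is a bisimulation if it covers itself. -/
def Bisimulation (L : LTS S A) (B : Set (S × S)) : Prop := L.CoversSet B B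

/-- `s ∼ t`: some bisimulation contains `(s,t)`. -/
def Bisim (L : LTS S A) (s t : S) : Prop := ∃ B, L.Bisimulation B ∧ (s, t) ∈ B

end LTS

/-! If every pair of `B` lies in `∼_n` and `B` covers `p`, then `p ∈ ∼_{n+1}`; so a set covering
`B₀` has `LeastEqLev` at least one below that of `B₀`. Along the chain this gives
`LeastEqLev(B_k) + k ≤ eqlevel(s,t) = e`, and the infimum `LeastEqLev(B_k)` is attained because
`ℕ∞` is well-ordered. -/

namespace LTS

variable {S A : Type*} {L : LTS S A}

theorem Covers.mono {B B' : Set (S × S)} {p : S × S} (hc : L.Covers B p) (h : B ⊆ B') :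
    L.Covers B' p :=
  ⟨fun a s' hs' => (hc.1 a s' hs').imp fun _ ht => ⟨ht.1, h ht.2⟩,
    fun a t' ht' => (hc.2 a t' ht').imp fun _ hs => ⟨hs.1, h hs.2⟩⟩

theorem simN_succ_subset : ∀ n, L.simN (n + 1) ⊆ L.simN n
  | 0 => Set.subset_univ _
  | n + 1 => fun _ hp => Covers.mono hp (simN_succ_subset n)

theorem simN_antitone : Antitone L.simN :=
  antitone_nat_of_succ_le simN_succ_subset

theorem natCast_le_eqlevel_iff {s t : S} {n : ℕ} :
    (n : ℕ∞) ≤ L.eqlevel s t ↔ (s, t) ∈ L.simN n := by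
  refine ⟨fun hn => ?_, fun hst => le_sSup ⟨n, rfl, hst⟩⟩
  by_contra hst
  have hlt : ∀ j, (s, t) ∈ L.simN j → j < n := fun j hj =>
    lt_of_not_ge fun hnj => hst (simN_antitone hnj hj)
  obtain ⟨m, rfl⟩ : ∃ m, n = m + 1 := Nat.exists_eq_add_one.mpr (hlt 0 trivial)
  have hle : L.eqlevel s t ≤ m := sSup_le <| by
    rintro _ ⟨j, rfl, hj⟩
    exact_mod_cast Nat.lt_succ_iff.mp (hlt j hj)
  exact absurd (hn.trans hle) (by exact_mod_cast Nat.not_succ_le_self m)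

theorem leastEqLev_le {B : Set (S × S)} {p : S × S} (hp : p ∈ B) :
    L.leastEqLev B ≤ L.eqlevel p.1 p.2 :=
  sInf_le ⟨p, hp, rfl⟩

theorem le_leastEqLev_iff {B : Set (S × S)} {x : ℕ∞} :
    x ≤ L.leastEqLev B ↔ ∀ p ∈ B, x ≤ L.eqlevel p.1 p.2 :=
  ⟨fun h _ hp => h.trans (leastEqLev_le hp),
    fun h => le_sInf <| by rintro _ ⟨p, hp, rfl⟩; exact h p hp⟩

theorem leastEqLev_singleton (s t : S) : L.leastEqLev {(s, t)} = L.eqlevel s t := by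
  simp [leastEqLev]

theorem exists_eqlevel_eq_leastEqLev {B : Set (S × S)} (h : L.leastEqLev B ≠ ⊤) :
    ∃ p ∈ B, L.eqlevel p.1 p.2 = L.leastEqLev B := by
  have hne : {e : ℕ∞ | ∃ p ∈ B, e = L.eqlevel p.1 p.2}.Nonempty := by
    by_contra hempty
    exact h (by rw [leastEqLev, Set.not_nonempty_iff_eq_empty.mp hempty, sInf_empty])
  obtain ⟨p, hp, hpeq⟩ := csInf_mem hne
  exact ⟨p, hp, hpeq.symm⟩

theorem Covers.leastEqLev_add_one_le_eqlevel {B : Set (S × S)} {p : S × S}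
    (hc : L.Covers B p) : L.leastEqLev B + 1 ≤ L.eqlevel p.1 p.2 := by
  refine ENat.forall_natCast_le_iff_le.mp fun a ha => ?_
  cases a with
  | zero => exact bot_le
  | succ n =>
    have hn : (n : ℕ∞) ≤ L.leastEqLev B := by
      rw [Nat.cast_succ] at ha
      exact (ENat.add_le_add_iff_right ENat.one_ne_top).mp ha
    have hB : B ⊆ L.simN n := fun q hq =>
      natCast_le_eqlevel_iff.mp (le_leastEqLev_iff.mp hn q hq)
    exact natCast_le_eqlevel_iff.mpr (hc.mono hB)

theorem CoversSet.leastEqLev_add_one_le {B B' : Set (S × S)} (h : L.CoversSet B' B) :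
    L.leastEqLev B' + 1 ≤ L.leastEqLev B :=
  le_leastEqLev_iff.mpr fun p hp => (h p hp).leastEqLev_add_one_le_eqlevel

theorem leastEqLev_add_le_of_coversSet_chain {Bs : ℕ → Set (S × S)} {k : ℕ}
    (h : ∀ j < k, L.CoversSet (Bs (j + 1)) (Bs j)) :
    L.leastEqLev (Bs k) + k ≤ L.leastEqLev (Bs 0) := by
  induction k with
  | zero => simp
  | succ k ih =>
    calc L.leastEqLev (Bs (k + 1)) + (k + 1 : ℕ)
        = L.leastEqLev (Bs (k + 1)) + 1 + k := by push_cast; ring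
      _ ≤ L.leastEqLev (Bs k) + k := by
        gcongr
        exact (h k k.lt_succ_self).leastEqLev_add_one_le
      _ ≤ L.leastEqLev (Bs 0) := ih fun j hj => h j (hj.trans k.lt_succ_self)

end LTS

theorem min_expansion_seq_decreases_eqlevel_general {S A : Type*} (L : LTS S A)
    (s t : S) (e : ℕ)
    (he : L.eqlevel s t = (e : ℕ∞)) (k : ℕ) (Bs : ℕ → Set (S × S))
    (h0 : Bs 0 = {(s, t)}) (hstep : ∀ j < k, L.MinExp (Bs j) (Bs (j + 1))) :
    k ≤ e ∧ L.leastEqLev (Bs k) ≤ ((e - k : ℕ) : ℕ∞) ∧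
      ∃ p ∈ Bs k, L.eqlevel p.1 p.2 ≤ ((e - k : ℕ) : ℕ∞) := by
  have hchain := LTS.leastEqLev_add_le_of_coversSet_chain fun j hj => (hstep j hj).1
  rw [h0, LTS.leastEqLev_singleton, he] at hchain
  have hfinite : L.leastEqLev (Bs k) ≠ ⊤ := by
    rintro htop
    simp [htop] at hchain
  obtain ⟨p, hp, hpeq⟩ := LTS.exists_eqlevel_eq_leastEqLev hfinite
  lift L.leastEqLev (Bs k) to ℕ using hfinite with m
  have hmke : m + k ≤ e := by exact_mod_cast hchain
  have hmk : (m : ℕ∞) ≤ ((e - k : ℕ) : ℕ∞) := Nat.cast_le.mpr (by omega)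
  exact ⟨by omega, hmk, p, hp, hpeq ▸ hmk⟩

/-- If `eqlevel(s,t) = e < ω` and `{(s,t)} = B_0 ⊐ B_1 ⊐ ⋯ ⊐ B_k`, then
`k ≤ e` and `LeastEqLev(B_k) ≤ e − k`; in particular `B_k` contains a pair of
eq-level at most `e − k`. -/
theorem min_expansion_seq_decreases_eqlevel {S A : Type*} (L : LTS S A)
    (hfin : L.ImageFinite) (s t : S) (e : ℕ)
    (he : L.eqlevel s t = (e : ℕ∞)) (k : ℕ) (Bs : ℕ → Set (S × S))
    (h0 : Bs 0 = {(s, t)}) (hstep : ∀ j < k, L.MinExp (Bs j) (Bs (j + 1))) :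
    k ≤ e ∧ L.leastEqLev (Bs k) ≤ ((e - k : ℕ) : ℕ∞) ∧
      ∃ p ∈ Bs k, L.eqlevel p.1 p.2 ≤ ((e - k : ℕ) : ℕ∞) :=
  min_expansion_seq_decreases_eqlevel_general L s t e he k Bs h0 hstep
end

section
/- Let G = (N, Act, R) be a first-order grammar such that for each nonterminal A and each i ∈ [1, arity(A)] there exists an (A,i)-sink word, and let M_0 = 1 + max over all A, i of the length of a shortest (A,i)-sink word. If T →u T' is a sinking path in the rule-based LTS L^rul_G, then it can be written T →u1 V →u2 T' with u = u1·u2, |u2| < M_0, and V a subterm occurring in T at depth at least |u| ÷ M_0 (integer division). -/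
/-!
In every window of `M0 G` consecutive steps a sinking path moves from some term to one of
its root-successors. So within its first `M0 G` steps the path from `T` reaches a child `W`
of `T`, and, the rule-based LTS being deterministic, the rest of the path from `W` is again
sinking. Each such descent by one level consumes at most `M0 G` steps, and descending until
fewer than `M0 G` steps remain therefore takes at least `|u| ÷ M0 G` descents.
-/

/-- The "signature" of a first-order grammar: a finite set of ranked nonterminals
(represented as `Fin ntCount`, with arities) and a finite set of actions
(represented as `Fin actCount`). -/
structure GrammarSig where
  ntCount : ℕ
  arity : Fin ntCount → ℕ
  actCount : ℕ

/-- The polynomial functor whose coinductive fixed point is the set of (finite or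
infinite) terms over the nonterminals: a node is labelled either by a nonterminal
`A` (with `arity A` ordered children) or by a variable `x_n`, `n : ℕ` (a leaf). -/
def GrammarSig.P (S : GrammarSig) : PFunctor :=
  ⟨Fin S.ntCount ⊕ ℕ, fun l =>
    match l with
    | Sum.inl A => Fin (S.arity A)
    | Sum.inr _ => Empty⟩

/-- Terms over the signature `S`: finite or infinite ordered trees with nodes labelled
by nonterminals (inner nodes) or variables (leaves). -/
def GTerm (S : GrammarSig) := PFunctor.M S.P

/-- The term consisting of the single variable `x_n`. -/
def GTerm.var (S : GrammarSig) (n : ℕ) : GTerm S :=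
  PFunctor.M.mk ⟨Sum.inr n, fun e => e.elim⟩

/-- The term `A(c 0, …, c (m-1))`. -/
def GTerm.app {S : GrammarSig} (A : Fin S.ntCount) (c : Fin (S.arity A) → GTerm S) :
    GTerm S :=
  PFunctor.M.mk ⟨Sum.inl A, c⟩

/-- Applying a substitution `σ` to a term `T`: every occurrence of a variable `x_n`
in `T` is replaced by `σ n` (defined corecursively). -/
def GTerm.subst {S : GrammarSig} (σ : ℕ → GTerm S) (T : GTerm S) : GTerm S :=
  PFunctor.M.corec
    (fun st : Bool × GTerm S =>
      match PFunctor.M.dest st.2 with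
      | ⟨Sum.inl A, c⟩ => ⟨Sum.inl A, fun i => (st.1, c i)⟩
      | ⟨Sum.inr n, _⟩ =>
        if st.1 then
          ⟨(PFunctor.M.dest (σ n)).1, fun i => (false, (PFunctor.M.dest (σ n)).2 i)⟩
        else ⟨Sum.inr n, fun e => e.elim⟩)
    (true, T)

/-- A substitution (as a total map `ℕ → GTerm S`) has finite support. -/
def FinSupp {S : GrammarSig} (σ : ℕ → GTerm S) : Prop :=
  {n | σ n ≠ GTerm.var S n}.Finite

/-- `childRel S T T'`: `T'` is a root-successor (depth-1 subterm occurrence) of `T`. -/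
def childRel (S : GrammarSig) : GTerm S → GTerm S → Prop := fun T T' =>
  ∃ (A : Fin S.ntCount) (c : Fin (S.arity A) → GTerm S), T = GTerm.app A c ∧ ∃ i, T' = c i

/-- `T'` is a subterm of `T`. -/
def SubtermOf (S : GrammarSig) (T' T : GTerm S) : Prop :=
  Relation.ReflTransGen (childRel S) T T'

/-- The variable `x_n` occurs in `T`. -/
def VarOccurs (S : GrammarSig) (n : ℕ) (T : GTerm S) : Prop :=
  SubtermOf S (GTerm.var S n) T

/-- `OccAtDepth S d T V`: `V` has a subterm-occurrence in `T` at depth `d`. -/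
inductive OccAtDepth (S : GrammarSig) : ℕ → GTerm S → GTerm S → Prop
  | refl (T : GTerm S) : OccAtDepth S 0 T T
  | step {d : ℕ} {T T' V : GTerm S} :
      childRel S T T' → OccAtDepth S d T' V → OccAtDepth S (d + 1) T V

/-- A term is regular if it has only finitely many distinct subterms. -/
def RegularT (S : GrammarSig) (T : GTerm S) : Prop := {T' | SubtermOf S T' T}.Finite

/-- The presentation size of a (regular) term: the number of its distinct subterms. -/
noncomputable def pressize (S : GrammarSig) (T : GTerm S) : ℕ :=
  {T' | SubtermOf S T' T}.ncard

/-- Finite terms over the signature `S`. -/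
inductive FTerm (S : GrammarSig) where
  | var : ℕ → FTerm S
  | app : (A : Fin S.ntCount) → (Fin (S.arity A) → FTerm S) → FTerm S

/-- The (finite or infinite) term corresponding to a finite term. -/
def FTerm.toTerm {S : GrammarSig} : FTerm S → GTerm S
  | .var n => GTerm.var S n
  | .app A c => GTerm.app A (fun i => (c i).toTerm)

/-- The variable `x_n` occurs in the finite term `E`. -/
def FTerm.VOccurs {S : GrammarSig} (n : ℕ) : FTerm S → Prop
  | .var m => m = n
  | .app _ c => ∃ i, (c i).VOccurs n

/-- The depth of a finite term (the largest depth of a subterm occurrence). -/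
def FTerm.depth {S : GrammarSig} : FTerm S → ℕ
  | .var _ => 0
  | .app _ c => Finset.univ.sup fun i => (c i).depth + 1

/-- A rule `A(x_0, …, x_{m−1}) →ₐ E` of a first-order grammar: `E` is a finite term
all of whose variables are among `x_0, …, x_{m−1}` where `m = arity A`. -/
structure GRule (S : GrammarSig) where
  nt : Fin S.ntCount
  act : Fin S.actCount
  rhs : FTerm S
  rhs_wf : ∀ n : ℕ, rhs.VOccurs n → n < S.arity nt

/-- A first-order grammar: a signature together with a finite set (list) of rules. -/
structure FOGrammar where
  sig : GrammarSig
  rules : List (GRule sig)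

/-- The term `A(x_0, …, x_{m−1})` (the left-hand side of rules for `A`). -/
def lhsTerm {S : GrammarSig} (A : Fin S.ntCount) : GTerm S :=
  GTerm.app A fun i => GTerm.var S i.val

/-- The rule-based LTS `L^rul_G`: states are the terms, actions are the rules of `G`,
and a rule `r : A(x_0,…,x_{m−1}) →ₐ E` induces `(A(x_0,…,x_{m−1}))σ →r Eσ` for every
substitution `σ`. -/
def LTSrul (G : FOGrammar) : LTS (GTerm G.sig) (GRule G.sig) where
  Tr r T T' := r ∈ G.rules ∧ ∃ σ : ℕ → GTerm G.sig, FinSupp σ ∧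
    T = GTerm.subst σ (lhsTerm r.nt) ∧ T' = GTerm.subst σ r.rhs.toTerm

/-- The action-based LTS `L^act_G`: the transitions of `L^rul_G` relabelled by the
actions of the rules; in addition each variable `x_n` has its own fresh action
(represented by `Sum.inr n`) with the single transition `x_n →_{a_{x_n}} x_n`. -/
def LTSact (G : FOGrammar) : LTS (GTerm G.sig) (Fin G.sig.actCount ⊕ ℕ) where
  Tr a T T' :=
    match a with
    | Sum.inl a => ∃ r : GRule G.sig, r.act = a ∧ (LTSrul G).Tr r T T'
    | Sum.inr n => T = GTerm.var G.sig n ∧ T' = GTerm.var G.sig n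

/-- `RPath G T w T'`: the path `T →w T'` in the rule-based LTS `L^rul_G`, `w ∈ R*`. -/
inductive RPath (G : FOGrammar) : GTerm G.sig → List (GRule G.sig) → GTerm G.sig → Prop
  | nil (T : GTerm G.sig) : RPath G T [] T
  | cons {T T1 T' : GTerm G.sig} {r : GRule G.sig} {w : List (GRule G.sig)} :
      (LTSrul G).Tr r T T1 → RPath G T1 w T' → RPath G T (r :: w) T'

/-- `APath G T w T'`: the path `T →w T'` in the action-based LTS `L^act_G` for a word
`w ∈ Act*` of proper actions (using no special variable transitions). -/
inductive APath (G : FOGrammar) :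
    GTerm G.sig → List (Fin G.sig.actCount) → GTerm G.sig → Prop
  | nil (T : GTerm G.sig) : APath G T [] T
  | cons {T T1 T' : GTerm G.sig} {a : Fin G.sig.actCount} {w : List (Fin G.sig.actCount)} :
      (LTSact G).Tr (Sum.inl a) T T1 → APath G T1 w T' → APath G T (a :: w) T'

/-- `w ∈ R*` is an `(A,i)`-sink word: `A(x_0,…,x_{m−1}) →w x_i` in `L^rul_G`. -/
def SinkWord (G : FOGrammar) (A : Fin G.sig.ntCount) (i : Fin (G.sig.arity A))
    (w : List (GRule G.sig)) : Prop :=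
  RPath G (lhsTerm A) w (GTerm.var G.sig i.val)

/-- `M_0 = 1 + max_{A,i} (length of a shortest (A,i)-sink word)`. -/
noncomputable def M0 (G : FOGrammar) : ℕ :=
  1 + Finset.univ.sup fun A : Fin G.sig.ntCount =>
        Finset.univ.sup fun i : Fin (G.sig.arity A) =>
          sInf {n : ℕ | ∃ w, SinkWord G A i w ∧ w.length = n}

/-- The path `V →w` is root-performable: `A(x_0,…,x_{m−1}) →w` for `A` the root
nonterminal of `V` (so `w` is enabled by any term with root `A`). A root-performable
path of length `M_0` is called a non-sink. -/
def RootPerf (G : FOGrammar) (V : GTerm G.sig) (w : List (GRule G.sig)) : Prop :=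
  ∃ (A : Fin G.sig.ntCount) (c : Fin (G.sig.arity A) → GTerm G.sig),
    V = GTerm.app A c ∧ ∃ H, RPath G (lhsTerm A) w H

/-- The path `T →u` is sinking: it contains no non-sink, i.e. every factorization
`u = u_1 u_2 u_3` with `|u_2| = M_0` sinks to a root-successor within the middle
segment: `u_2 = u'_2 u''_2` with `u'_2 ≠ ε`, `T →u_1 V' →u'_2 V''`, and `V''` a
root-successor of `V'`. -/
def Sinking (G : FOGrammar) (T : GTerm G.sig) (u : List (GRule G.sig)) : Prop :=
  ∀ u1 u2 u3, u = u1 ++ u2 ++ u3 → u2.length = M0 G →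
    ∃ (u2a u2b : List (GRule G.sig)) (V' V'' : GTerm G.sig),
      u2 = u2a ++ u2b ∧ u2a ≠ [] ∧
      RPath G T u1 V' ∧ RPath G V' u2a V'' ∧ childRel G.sig V' V''

namespace GTerm

variable {S : GrammarSig}

/-- The step function of the corecursion defining `GTerm.subst`; the flag records whether
we are still above the substituted variables. -/
def substStep (σ : ℕ → GTerm S) : Bool × GTerm S → S.P (Bool × GTerm S) :=
  fun st =>
    match PFunctor.M.dest st.2 with
    | ⟨Sum.inl A, c⟩ => ⟨Sum.inl A, fun i => (st.1, c i)⟩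
    | ⟨Sum.inr n, _⟩ =>
      if st.1 then
        ⟨(PFunctor.M.dest (σ n)).1, fun i => (false, (PFunctor.M.dest (σ n)).2 i)⟩
      else ⟨Sum.inr n, fun e => e.elim⟩

theorem substStep_false (σ : ℕ → GTerm S) (T : GTerm S) :
    substStep σ (false, T) = S.P.map (Prod.mk false) (PFunctor.M.dest T) := by
  rcases h : PFunctor.M.dest T with ⟨A | n, c⟩
  · simp only [substStep, h]
    rfl
  · simp only [substStep, h]
    exact congrArg (Sigma.mk _) (funext fun e => e.elim)

theorem corec_substStep_false (σ : ℕ → GTerm S) (T : GTerm S) :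
    PFunctor.M.corec (substStep σ) (false, T) = T := by
  have hcopy : (fun T => PFunctor.M.corec (substStep σ) (false, T)) =
      PFunctor.M.corec PFunctor.M.dest :=
    PFunctor.M.corec_unique _ _ fun T => by
      rw [PFunctor.M.dest_corec, substStep_false]
      rfl
  have hid : (id : GTerm S → GTerm S) = PFunctor.M.corec PFunctor.M.dest :=
    PFunctor.M.corec_unique _ _ fun T => (PFunctor.id_map _ _).symm
  exact congrFun (hcopy.trans hid.symm) T

theorem subst_var (σ : ℕ → GTerm S) (n : ℕ) : subst σ (var S n) = σ n := by
  rw [← PFunctor.M.mk_dest (subst σ _), ← PFunctor.M.mk_dest (σ n)]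
  congr 1
  show PFunctor.M.dest (PFunctor.M.corec (substStep σ) (true, var S n)) = _
  rw [PFunctor.M.dest_corec]
  have hcopy : PFunctor.M.corec (substStep σ) ∘ Prod.mk false = id :=
    funext (corec_substStep_false σ)
  exact (S.P.map_map (Prod.mk false) _ (PFunctor.M.dest (σ n))).trans
    ((congrArg (S.P.map · _) hcopy).trans (S.P.id_map _))

theorem subst_app (σ : ℕ → GTerm S) (A : Fin S.ntCount) (c : Fin (S.arity A) → GTerm S) :
    subst σ (app A c) = app A fun i => subst σ (c i) := by
  rw [← PFunctor.M.mk_dest (subst σ _)]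
  rfl

theorem app_injective {A : Fin S.ntCount} {c c' : Fin (S.arity A) → GTerm S}
    (h : app A c = app A c') : c = c' :=
  eq_of_heq (Sigma.mk.inj_iff.mp (PFunctor.M.mk_inj h)).2

end GTerm

theorem FTerm.subst_toTerm_congr {S : GrammarSig} {σ σ' : ℕ → GTerm S} (E : FTerm S)
    (h : ∀ n, E.VOccurs n → σ n = σ' n) :
    GTerm.subst σ E.toTerm = GTerm.subst σ' E.toTerm := by
  induction E with
  | var m => simpa only [FTerm.toTerm, GTerm.subst_var] using h m rfl
  | app A c ih =>
    simp only [FTerm.toTerm, GTerm.subst_app]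
    exact congrArg _ (funext fun i => ih i fun n hn => h n ⟨i, hn⟩)

section Paths

variable {G : FOGrammar}

/-- A rule determines the substitution on the variables of its left-hand side, which are
all the variables of its right-hand side. -/
theorem LTSrul.tr_deterministic {r : GRule G.sig} {T T₁ T₂ : GTerm G.sig}
    (h₁ : (LTSrul G).Tr r T T₁) (h₂ : (LTSrul G).Tr r T T₂) : T₁ = T₂ := by
  obtain ⟨-, σ, -, rfl, rfl⟩ := h₁
  obtain ⟨-, σ', -, hlhs, rfl⟩ := h₂
  simp only [lhsTerm, GTerm.subst_app, GTerm.subst_var] at hlhs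
  have hσ := GTerm.app_injective hlhs
  exact r.rhs.subst_toTerm_congr fun n hn => congrFun hσ ⟨n, r.rhs_wf n hn⟩

namespace RPath

theorem eq_of_nil {T T' : GTerm G.sig} (h : RPath G T [] T') : T' = T := by
  cases h
  rfl

theorem deterministic {w : List (GRule G.sig)} {T T₁ T₂ : GTerm G.sig}
    (h₁ : RPath G T w T₁) (h₂ : RPath G T w T₂) : T₁ = T₂ := by
  induction h₁ generalizing T₂ with
  | nil => exact h₂.eq_of_nil.symm
  | cons htr _ ih =>
    cases h₂ with
    | cons htr' hp => exact ih (LTSrul.tr_deterministic htr' htr ▸ hp)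

theorem append {w₁ w₂ : List (GRule G.sig)} {T W T' : GTerm G.sig}
    (h₁ : RPath G T w₁ W) (h₂ : RPath G W w₂ T') : RPath G T (w₁ ++ w₂) T' := by
  induction h₁ with
  | nil => exact h₂
  | cons htr _ ih => exact cons htr (ih h₂)

theorem of_append {w₁ w₂ : List (GRule G.sig)} {T T' : GTerm G.sig}
    (h : RPath G T (w₁ ++ w₂) T') : ∃ W, RPath G T w₁ W ∧ RPath G W w₂ T' := by
  induction w₁ generalizing T with
  | nil => exact ⟨T, nil T, h⟩
  | cons r w₁ ih =>
    cases h with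
    | cons htr hp =>
      obtain ⟨W, hW₁, hW₂⟩ := ih hp
      exact ⟨W, cons htr hW₁, hW₂⟩

end RPath

theorem M0_pos (G : FOGrammar) : 0 < M0 G := by
  rw [M0]
  omega

namespace Sinking

theorem of_append {T W : GTerm G.sig} {a v : List (GRule G.sig)}
    (hs : Sinking G T (a ++ v)) (ha : RPath G T a W) : Sinking G W v := by
  intro v₁ v₂ v₃ hv hlen
  obtain ⟨b₁, b₂, V', V'', hb, hb₁, hpre, hmid, hchild⟩ :=
    hs (a ++ v₁) v₂ v₃ (by simp [hv]) hlen
  obtain ⟨W', haW', hW'⟩ := hpre.of_append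
  cases haW'.deterministic ha
  exact ⟨b₁, b₂, V', V'', hb, hb₁, hW', hmid, hchild⟩

theorem exists_child_prefix {T T' : GTerm G.sig} {u : List (GRule G.sig)}
    (hs : Sinking G T u) (hp : RPath G T u T') (hlen : M0 G ≤ u.length) :
    ∃ (a v : List (GRule G.sig)) (W : GTerm G.sig), u = a ++ v ∧ a ≠ [] ∧
      a.length ≤ M0 G ∧ childRel G.sig T W ∧ RPath G T a W ∧ RPath G W v T' ∧
      Sinking G W v := by
  obtain ⟨a, b, T₀, W, hab, ha, hT₀, haW, hchild⟩ :=
    hs [] (u.take (M0 G)) (u.drop (M0 G)) (by simp) (by simp [hlen])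
  cases hT₀.eq_of_nil
  have hu : u = a ++ (b ++ u.drop (M0 G)) := by
    rw [← List.append_assoc, ← hab, List.take_append_drop]
  have halen : a.length ≤ M0 G := by
    have := congrArg List.length hab
    simp only [List.length_take, List.length_append] at this
    omega
  rw [hu] at hp hs
  obtain ⟨W', haW', hW'⟩ := hp.of_append
  cases haW'.deterministic haW
  exact ⟨a, _, _, hu, ha, halen, hchild, haW, hW', hs.of_append haW⟩

end Sinking

end Paths

theorem sinking_path_exposes_deep_subterm_general (G : FOGrammar)
    (T T' : GTerm G.sig) (u : List (GRule G.sig))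
    (hpath : RPath G T u T') (hsinking : Sinking G T u) :
    ∃ (u1 u2 : List (GRule G.sig)) (V : GTerm G.sig),
      u = u1 ++ u2 ∧ u2.length < M0 G ∧
      RPath G T u1 V ∧ RPath G V u2 T' ∧
      ∃ d : ℕ, u.length / M0 G ≤ d ∧ OccAtDepth G.sig d T V := by
  induction hn : u.length using Nat.strong_induction_on generalizing T u with | _ n ih => ?_
  subst hn
  by_cases hshort : u.length < M0 G
  · exact ⟨[], u, T, rfl, hshort, .nil T, hpath, 0, by simp [Nat.div_eq_of_lt hshort], .refl T⟩
  obtain ⟨a, v, W, rfl, ha, halen, hchild, haW, hWv, hsv⟩ :=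
    hsinking.exists_child_prefix hpath (not_lt.mp hshort)
  have hvlen : v.length < (a ++ v).length := by
    simpa using List.length_pos_iff.mpr ha
  obtain ⟨v₁, v₂, V, rfl, hv₂, hv₁, hV, d, hd, hocc⟩ := ih _ hvlen W v hWv hsv rfl
  refine ⟨a ++ v₁, v₂, V, by simp, hv₂, haW.append hv₁, hV, d + 1, ?_, .step hchild hocc⟩
  calc (a ++ (v₁ ++ v₂)).length / M0 G ≤ ((v₁ ++ v₂).length + M0 G) / M0 G := by
        gcongr
        rw [List.length_append]
        omega
    _ = (v₁ ++ v₂).length / M0 G + 1 := Nat.add_div_right _ (M0_pos G)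
    _ ≤ d + 1 := by omega

/-- assume every `(A,i)` has a sink word. If `T →u T'` is a sinking path
in `L^rul_G`, then it can be written `T →u1 V →u2 T'` with `|u2| < M_0` and `V` a
subterm occurring in `T` at depth at least `|u| ÷ M_0`. -/
theorem sinking_path_exposes_deep_subterm (G : FOGrammar)
    (hsink : ∀ (A : Fin G.sig.ntCount) (i : Fin (G.sig.arity A)),
      ∃ w, SinkWord G A i w)
    (T T' : GTerm G.sig) (u : List (GRule G.sig))
    (hpath : RPath G T u T') (hsinking : Sinking G T u) :
    ∃ (u1 u2 : List (GRule G.sig)) (V : GTerm G.sig),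
      u = u1 ++ u2 ∧ u2.length < M0 G ∧
      RPath G T u1 V ∧ RPath G V u2 T' ∧
      ∃ d : ℕ, u.length / M0 G ≤ d ∧ OccAtDepth G.sig d T V :=
  sinking_path_exposes_deep_subterm_general G T T' u hpath hsinking
end
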